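/- There exists a disjunctive positive program and a justified model of it that is not a stable model. Concretely, for the program with rules ℓ1 : a ∨ b and ℓ2 : a ∨ c, the interpretation {a,b} is a justified model (with explanation labelling λ(b)=ℓ1, λ(a)=ℓ2) but is not a stable model of the program. -/
import Mathlib


/-- A labelled rule: `label : head ← pbody ∧ ¬ nbody ∧ ¬¬ nnbody`. -/
structure LRule (At L : Type) where
  label : L
  head : Finset At
  pbody : Finset At
  nbody : Finset At
  nnbody : Finset At

variable {At L : Type}

/-- `I` satisfies the negative part of the body of `r`. -/
def satNBody (I : Set At) (r : LRule At L) : Prop :=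
  (∀ s ∈ r.nbody, s ∉ I) ∧ (∀ t ∈ r.nnbody, t ∈ I)

/-- `I` satisfies the (full) body of `r`. -/
def satBody (I : Set At) (r : LRule At L) : Prop :=
  (∀ q ∈ r.pbody, q ∈ I) ∧ satNBody I r

/-- Classical satisfaction of a rule. -/
def satRule (I : Set At) (r : LRule At L) : Prop :=
  satBody I r → ∃ p ∈ r.head, p ∈ I

/-- `I` is a classical model of the program `P`. -/
def IsModel (I : Set At) (P : Set (LRule At L)) : Prop := ∀ r ∈ P, satRule I r

/-- A labelled program has pairwise distinct labels. -/
def IsProgram (P : Set (LRule At L)) : Prop :=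
  ∀ r ∈ P, ∀ r' ∈ P, r.label = r'.label → r = r'

/-- The positive part of a rule (keeping its label). -/
def reductRule (r : LRule At L) : LRule At L :=
  { r with nbody := ∅, nnbody := ∅ }

/-- The reduct `P^I` of a set of labelled rules. -/
def reduct (P : Set (LRule At L)) (I : Set At) : Set (LRule At L) :=
  { r' | ∃ r ∈ P, satNBody I r ∧ r' = reductRule r }

/-- The rules of `P` supporting atom `p` under `I`. -/
def SupRules (I : Set At) (P : Set (LRule At L)) (p : At) : Set (LRule At L) :=
  { r | r ∈ P ∧ p ∈ r.head ∧ satBody I r }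

/-- `(E, lab)` is a support graph of `I` under `P`: vertices are the atoms of `I`,
`lab` injectively labels each atom of `I` with the label of a rule supporting it
whose positive body atoms are exactly its in-neighbours. -/
def IsSupportGraph (I : Set At) (P : Set (LRule At L))
    (E : At → At → Prop) (lab : At → L) : Prop :=
  (∀ p q, E p q → p ∈ I ∧ q ∈ I) ∧
  Set.InjOn lab I ∧
  (∀ p ∈ I, ∃ r ∈ P, r.label = lab p ∧ p ∈ r.head ∧ satBody I r ∧
    (∀ q, E q p ↔ q ∈ r.pbody))

/-- An explanation is an acyclic (well-founded) support graph. -/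
def IsExplanation (I : Set At) (P : Set (LRule At L))
    (E : At → At → Prop) (lab : At → L) : Prop :=
  IsSupportGraph I P E lab ∧ WellFounded E

/-- A supported model: a classical model admitting a support graph. -/
def IsSupportedModel (I : Set At) (P : Set (LRule At L)) : Prop :=
  IsModel I P ∧ ∃ E lab, IsSupportGraph I P E lab

/-- A justified model: a classical model admitting an explanation. -/
def IsJustifiedModel (I : Set At) (P : Set (LRule At L)) : Prop :=
  IsModel I P ∧ ∃ E lab, IsExplanation I P E lab

/-- A stable model: a minimal classical model of the reduct `P^I`. -/
def IsStableModel (I : Set At) (P : Set (LRule At L)) : Prop :=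
  IsModel I (reduct P I) ∧ ∀ J ⊆ I, IsModel J (reduct P I) → J = I

inductive A3 : Type | a | b | c
deriving DecidableEq

inductive L2 : Type | l1 | l2
deriving DecidableEq

/-- ℓ1 : a ∨ b. -/
def rab : LRule A3 L2 := ⟨L2.l1, {A3.a, A3.b}, ∅, ∅, ∅⟩
/-- ℓ2 : a ∨ c. -/
def rac : LRule A3 L2 := ⟨L2.l2, {A3.a, A3.c}, ∅, ∅, ∅⟩

def Pab : Set (LRule A3 L2) := {rab, rac}

theorem justified_not_stable :
    IsJustifiedModel ({A3.a, A3.b} : Set A3) Pab ∧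
    (∃ E lab, IsExplanation ({A3.a, A3.b} : Set A3) Pab E lab ∧
      lab A3.b = L2.l1 ∧ lab A3.a = L2.l2) ∧
    ¬ IsStableModel ({A3.a, A3.b} : Set A3) Pab := by
  classical
  have hmodel : IsModel ({A3.a, A3.b} : Set A3) Pab := by
    rintro r (rfl | rfl)
    · intro _; exact ⟨A3.a, by simp [rab], Or.inl rfl⟩
    · intro _; exact ⟨A3.a, by simp [rac], Or.inl rfl⟩
  set lab : A3 → L2 := fun x => match x with
    | A3.a => L2.l2 | A3.b => L2.l1 | A3.c => L2.l1 with hlab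
  have hsg : IsSupportGraph ({A3.a, A3.b} : Set A3) Pab (fun _ _ => False) lab := by
    refine ⟨fun p q h => h.elim, ?_, ?_⟩
    · rintro x (rfl | rfl) y (rfl | rfl) h <;> simp_all [hlab]
    · rintro p (rfl | rfl)
      · exact ⟨rac, Or.inr rfl, rfl, by simp [rac], ⟨by simp [rac], by simp [satNBody, rac], by simp [rac]⟩, by simp [rac]⟩
      · exact ⟨rab, Or.inl rfl, rfl, by simp [rab], ⟨by simp [rab], by simp [satNBody, rab], by simp [rab]⟩, by simp [rab]⟩
  have hexp : IsExplanation ({A3.a, A3.b} : Set A3) Pab (fun _ _ => False) lab :=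
    ⟨hsg, ⟨fun x => ⟨x, fun y h => h.elim⟩⟩⟩
  refine ⟨⟨hmodel, _, _, hexp⟩, ⟨_, _, hexp, rfl, rfl⟩, ?_⟩
  rintro ⟨_, hmin⟩
  have hJ : IsModel ({A3.a} : Set A3) (reduct Pab ({A3.a, A3.b} : Set A3)) := by
    rintro r ⟨r0, (rfl | rfl), _, rfl⟩ _
    · exact ⟨A3.a, by simp [reductRule, rab], rfl⟩
    · exact ⟨A3.a, by simp [reductRule, rac], rfl⟩
  have := hmin {A3.a} (by intro x hx; exact Or.inl hx) hJ
  have : A3.b ∈ ({A3.a} : Set A3) := this ▸ Or.inr rfl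
  simp at this
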